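/- arXiv:2204.08350 — 8 statements merged into one kernel-verified Lean document; each statement's English description precedes it below -/
import Mathlib

section
/- Let A be an m×n real matrix and C be an n×p real matrix with A * C = 0. Let U = range(x ↦ Aᵀ.mulVec x) and V = range(y ↦ C.mulVec y), submodules of Fin n → ℝ, and let P_U and P_V denote the orthogonal projections onto U and V respectively. Suppose G₁, G₂ : (Fin n → ℝ) → (Fin n → ℝ) satisfy: G₁(x) ∈ U and G₁(x) = G₁(P_U x) for all x; and G₂(x) ∈ V and G₂(x) = G₂(P_V x) for all x. Then there exist functions f : (Fin m → ℝ) → (Fin m → ℝ) and g : (Fin p → ℝ) → (Fin p → ℝ) such that for all x : Fin n → ℝ, G₁(x) + G₂(x) = Aᵀ.mulVec (f (A.mulVec x)) + C.mulVec (g (Cᵀ.mulVec x)). -/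
open Matrix

lemma proj_congr {n : ℕ} (U : Submodule ℝ (Fin n → ℝ)) (P : (Fin n → ℝ) → (Fin n → ℝ))
    (hP : ∀ x : Fin n → ℝ, P x ∈ U ∧ ∀ u ∈ U, (x - P x) ⬝ᵥ u = 0)
    {x x' : Fin n → ℝ} (hx : ∀ u ∈ U, (x - x') ⬝ᵥ u = 0) : P x = P x' := by
  have hd : P x - P x' ∈ U := U.sub_mem (hP x).1 (hP x').1
  have h0 : (P x - P x') ⬝ᵥ (P x - P x') = 0 := by
    have e : P x - P x' = (x' - P x') - (x - P x) + (x - x') := by abel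
    nth_rewrite 1 [e]
    rw [add_dotProduct, sub_dotProduct, (hP x').2 _ hd, (hP x).2 _ hd, hx _ hd]
    ring
  have := dotProduct_self_eq_zero.mp h0
  exact sub_eq_zero.mp this

/-- Realization of `G₁ ⊕ G₂ ⊕ 0` as a vector field of the form
`θ ↦ Aᵀ f (A θ) + C g (Cᵀ θ)`.  Here `A * C = 0`, `PU`, `PV` are the orthogonal projections
(w.r.t. the dot product) onto `U = range Aᵀ` and `V = range C`, and `G₁`, `G₂` take values in
`U` resp. `V` and depend only on the `U`- resp. `V`-component of their argument. -/
theorem realization_of_direct_sum {m n p : ℕ}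
    (A : Matrix (Fin m) (Fin n) ℝ) (C : Matrix (Fin n) (Fin p) ℝ)
    (hAC : A * C = 0)
    (PU PV : (Fin n → ℝ) → (Fin n → ℝ))
    (hPU : ∀ x : Fin n → ℝ, PU x ∈ LinearMap.range Aᵀ.mulVecLin ∧
      ∀ u ∈ LinearMap.range Aᵀ.mulVecLin, (x - PU x) ⬝ᵥ u = 0)
    (hPV : ∀ x : Fin n → ℝ, PV x ∈ LinearMap.range C.mulVecLin ∧
      ∀ u ∈ LinearMap.range C.mulVecLin, (x - PV x) ⬝ᵥ u = 0)
    (G₁ G₂ : (Fin n → ℝ) → (Fin n → ℝ))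
    (hG₁mem : ∀ x : Fin n → ℝ, G₁ x ∈ LinearMap.range Aᵀ.mulVecLin)
    (hG₁dep : ∀ x : Fin n → ℝ, G₁ x = G₁ (PU x))
    (hG₂mem : ∀ x : Fin n → ℝ, G₂ x ∈ LinearMap.range C.mulVecLin)
    (hG₂dep : ∀ x : Fin n → ℝ, G₂ x = G₂ (PV x)) :
    ∃ (f : (Fin m → ℝ) → (Fin m → ℝ)) (g : (Fin p → ℝ) → (Fin p → ℝ)),
      ∀ x : Fin n → ℝ,
        G₁ x + G₂ x = Aᵀ.mulVec (f (A.mulVec x)) + C.mulVec (g (Cᵀ.mulVec x)) := by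
  classical
  -- key congruences
  have key₁ : ∀ x x' : Fin n → ℝ, A.mulVec x = A.mulVec x' → G₁ x = G₁ x' := by
    intro x x' h
    have : PU x = PU x' := by
      apply proj_congr _ PU hPU
      rintro u ⟨z, rfl⟩
      have : (x - x') ⬝ᵥ Aᵀ.mulVecLin z = (A.mulVec x - A.mulVec x') ⬝ᵥ z := by
        simp [Matrix.mulVecLin_apply, Matrix.mulVec_transpose, Matrix.sub_vecMul,
          sub_dotProduct, Matrix.dotProduct_mulVec, dotProduct_comm]
      rw [this, h, sub_self, zero_dotProduct]
    rw [hG₁dep x, hG₁dep x', this]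
  have key₂ : ∀ x x' : Fin n → ℝ, Cᵀ.mulVec x = Cᵀ.mulVec x' → G₂ x = G₂ x' := by
    intro x x' h
    have : PV x = PV x' := by
      apply proj_congr _ PV hPV
      rintro u ⟨z, rfl⟩
      have : (x - x') ⬝ᵥ C.mulVecLin z = (Cᵀ.mulVec x - Cᵀ.mulVec x') ⬝ᵥ z := by
        simp [Matrix.mulVecLin_apply, Matrix.mulVec_transpose, Matrix.sub_vecMul,
          sub_dotProduct, Matrix.dotProduct_mulVec, dotProduct_comm]
      rw [this, h, sub_self, zero_dotProduct]
    rw [hG₂dep x, hG₂dep x', this]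
  refine ⟨fun y => if h : ∃ x, A.mulVec x = y then
      Classical.choose (hG₁mem (Classical.choose h)) else 0,
    fun y => if h : ∃ x, Cᵀ.mulVec x = y then
      Classical.choose (hG₂mem (Classical.choose h)) else 0, fun x => ?_⟩
  have h1 : ∃ x', A.mulVec x' = A.mulVec x := ⟨x, rfl⟩
  have h2 : ∃ x', Cᵀ.mulVec x' = Cᵀ.mulVec x := ⟨x, rfl⟩
  simp only [dif_pos h1, dif_pos h2]
  have e1 : Aᵀ.mulVec (Classical.choose (hG₁mem (Classical.choose h1)))
      = G₁ (Classical.choose h1) := Classical.choose_spec (hG₁mem (Classical.choose h1))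
  have e2 : C.mulVec (Classical.choose (hG₂mem (Classical.choose h2)))
      = G₂ (Classical.choose h2) := Classical.choose_spec (hG₂mem (Classical.choose h2))
  rw [e1, e2, key₁ _ x (Classical.choose_spec h1), key₂ _ x (Classical.choose_spec h2)]
end

section
/- Let A be an m×n real matrix and C be an n×p real matrix with A * C = 0, and set r₁ = A.rank and r₂ = C.rank (so r₁ + r₂ ≤ n). Then: (a) for every f : (Fin m → ℝ) → (Fin m → ℝ) and g : (Fin p → ℝ) → (Fin p → ℝ), the map G : (Fin n → ℝ) → (Fin n → ℝ) given by G(θ) = Aᵀ.mulVec (f (A.mulVec θ)) + C.mulVec (g (Cᵀ.mulVec θ)) is linearly conjugate to some (r₁, r₂, n)-vector field; (b) conversely, every (r₁, r₂, n)-vector field is linearly conjugate to a map of this form for some choice of f and g. -/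
open Matrix

/-- `H` is an `(α, β, n)`-vector field: under the canonical identification of `Fin n` with
`Fin α ⊕ Fin β ⊕ Fin (n - α - β)`, `H` decomposes as `H₁ ⊕ H₂ ⊕ 0`. -/
def IsABNVectorField (α β n : ℕ) (H : (Fin n → ℝ) → (Fin n → ℝ)) : Prop :=
  ∃ (γ : ℕ) (hγ : α + β + γ = n)
    (H₁ : (Fin α → ℝ) → (Fin α → ℝ)) (H₂ : (Fin β → ℝ) → (Fin β → ℝ)),
    ∀ x : Fin n → ℝ,
      (∀ i : Fin α,
        H x (Fin.cast hγ ((i.castAdd β).castAdd γ)) =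
          H₁ (fun j => x (Fin.cast hγ ((j.castAdd β).castAdd γ))) i) ∧
      (∀ i : Fin β,
        H x (Fin.cast hγ ((i.natAdd α).castAdd γ)) =
          H₂ (fun j => x (Fin.cast hγ ((j.natAdd α).castAdd γ))) i) ∧
      (∀ i : Fin γ, H x (Fin.cast hγ (i.natAdd (α + β))) = 0)

/-- `G` and `H` are linearly conjugate. -/
def LinearlyConjugate (n : ℕ) (G H : (Fin n → ℝ) → (Fin n → ℝ)) : Prop :=
  ∃ M : (Fin n → ℝ) ≃ₗ[ℝ] (Fin n → ℝ), ∀ x : Fin n → ℝ, H x = M (G (M.symm x))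

namespace SimplicialAux

open Module LinearMap

noncomputable section

/-- The canonical identification of `Fin r₁ ⊕ Fin r₂ ⊕ Fin γ` with `Fin n`. -/
def idxEquiv {r₁ r₂ γ n : ℕ} (h : r₁ + r₂ + γ = n) : (Fin r₁ ⊕ Fin r₂ ⊕ Fin γ) ≃ Fin n :=
  ((Equiv.sumCongr (Equiv.refl (Fin r₁)) finSumFinEquiv).trans finSumFinEquiv).trans
    (finCongr (by omega))

lemma idxEquiv_inl {r₁ r₂ γ n : ℕ} (h : r₁ + r₂ + γ = n) (i : Fin r₁) :
    idxEquiv h (Sum.inl i) = Fin.cast h ((i.castAdd r₂).castAdd γ) := by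
  apply Fin.ext; simp [idxEquiv]

lemma idxEquiv_inr_inl {r₁ r₂ γ n : ℕ} (h : r₁ + r₂ + γ = n) (i : Fin r₂) :
    idxEquiv h (Sum.inr (Sum.inl i)) = Fin.cast h ((i.natAdd r₁).castAdd γ) := by
  apply Fin.ext; simp [idxEquiv]

lemma idxEquiv_inr_inr {r₁ r₂ γ n : ℕ} (h : r₁ + r₂ + γ = n) (i : Fin γ) :
    idxEquiv h (Sum.inr (Sum.inr i)) = Fin.cast h (i.natAdd (r₁ + r₂)) := by
  apply Fin.ext; simp [idxEquiv]; omega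

/-- The coordinate-splitting linear equivalence. -/
def splitEquiv {r₁ r₂ γ n : ℕ} (h : r₁ + r₂ + γ = n) :
    (Fin n → ℝ) ≃ₗ[ℝ] (Fin r₁ → ℝ) × (Fin r₂ → ℝ) × (Fin γ → ℝ) where
  toFun x := (fun i => x (idxEquiv h (Sum.inl i)),
    fun i => x (idxEquiv h (Sum.inr (Sum.inl i))),
    fun i => x (idxEquiv h (Sum.inr (Sum.inr i))))
  invFun q := fun j => Sum.elim q.1 (Sum.elim q.2.1 q.2.2) ((idxEquiv h).symm j)
  map_add' x y := rfl
  map_smul' c x := rfl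
  left_inv x := by
    funext j
    show Sum.elim _ _ ((idxEquiv h).symm j) = x j
    obtain ⟨s, rfl⟩ : ∃ s, idxEquiv h s = j := ⟨_, (idxEquiv h).apply_symm_apply j⟩
    rcases s with i | i | i <;> simp
  right_inv q := by
    refine Prod.ext (funext fun i => ?_) (Prod.ext (funext fun i => ?_) (funext fun i => ?_)) <;>
      · show Sum.elim _ _ ((idxEquiv h).symm (idxEquiv h _)) = _
        simp

lemma splitEquiv_apply_fst {r₁ r₂ γ n : ℕ} (h : r₁ + r₂ + γ = n) (x : Fin n → ℝ) (i : Fin r₁) :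
    (splitEquiv h x).1 i = x (Fin.cast h ((i.castAdd r₂).castAdd γ)) := by
  rw [← idxEquiv_inl h i]; rfl

lemma splitEquiv_apply_snd {r₁ r₂ γ n : ℕ} (h : r₁ + r₂ + γ = n) (x : Fin n → ℝ) (i : Fin r₂) :
    (splitEquiv h x).2.1 i = x (Fin.cast h ((i.natAdd r₁).castAdd γ)) := by
  rw [← idxEquiv_inr_inl h i]; rfl

lemma splitEquiv_symm_fst {r₁ r₂ γ n : ℕ} (h : r₁ + r₂ + γ = n)
    (q : (Fin r₁ → ℝ) × (Fin r₂ → ℝ) × (Fin γ → ℝ)) (i : Fin r₁) :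
    (splitEquiv h).symm q (Fin.cast h ((i.castAdd r₂).castAdd γ)) = q.1 i := by
  rw [← idxEquiv_inl h i]
  show Sum.elim _ _ ((idxEquiv h).symm (idxEquiv h _)) = _
  simp

lemma splitEquiv_symm_snd {r₁ r₂ γ n : ℕ} (h : r₁ + r₂ + γ = n)
    (q : (Fin r₁ → ℝ) × (Fin r₂ → ℝ) × (Fin γ → ℝ)) (i : Fin r₂) :
    (splitEquiv h).symm q (Fin.cast h ((i.natAdd r₁).castAdd γ)) = q.2.1 i := by
  rw [← idxEquiv_inr_inl h i]
  show Sum.elim _ _ ((idxEquiv h).symm (idxEquiv h _)) = _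
  simp

lemma splitEquiv_symm_thd {r₁ r₂ γ n : ℕ} (h : r₁ + r₂ + γ = n)
    (q : (Fin r₁ → ℝ) × (Fin r₂ → ℝ) × (Fin γ → ℝ)) (i : Fin γ) :
    (splitEquiv h).symm q (Fin.cast h (i.natAdd (r₁ + r₂))) = q.2.2 i := by
  rw [← idxEquiv_inr_inr h i]
  show Sum.elim _ _ ((idxEquiv h).symm (idxEquiv h _)) = _
  simp

variable {m n p : ℕ}

def Usub (A : Matrix (Fin m) (Fin n) ℝ) : Submodule ℝ (Fin n → ℝ) :=
  LinearMap.range Aᵀ.mulVecLin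

def Vsub (C : Matrix (Fin n) (Fin p) ℝ) : Submodule ℝ (Fin n → ℝ) :=
  LinearMap.range C.mulVecLin

def Wsub (A : Matrix (Fin m) (Fin n) ℝ) (C : Matrix (Fin n) (Fin p) ℝ) :
    Submodule ℝ (Fin n → ℝ) :=
  LinearMap.ker A.mulVecLin ⊓ LinearMap.ker Cᵀ.mulVecLin

def gam (A : Matrix (Fin m) (Fin n) ℝ) (C : Matrix (Fin n) (Fin p) ℝ) : ℕ :=
  finrank ℝ (Wsub A C)

lemma finrank_Usub (A : Matrix (Fin m) (Fin n) ℝ) : finrank ℝ (Usub A) = A.rank :=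
  A.rank_transpose

lemma finrank_Vsub (C : Matrix (Fin n) (Fin p) ℝ) : finrank ℝ (Vsub C) = C.rank := rfl

def eU (A : Matrix (Fin m) (Fin n) ℝ) : (Fin A.rank → ℝ) ≃ₗ[ℝ] Usub A :=
  (Module.finBasisOfFinrankEq ℝ _ (finrank_Usub A)).equivFun.symm

def eV (C : Matrix (Fin n) (Fin p) ℝ) : (Fin C.rank → ℝ) ≃ₗ[ℝ] Vsub C :=
  (Module.finBasisOfFinrankEq ℝ _ (finrank_Vsub C)).equivFun.symm

def eW (A : Matrix (Fin m) (Fin n) ℝ) (C : Matrix (Fin n) (Fin p) ℝ) :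
    (Fin (gam A C) → ℝ) ≃ₗ[ℝ] Wsub A C :=
  (Module.finBasisOfFinrankEq ℝ _ rfl).equivFun.symm

def Phi (A : Matrix (Fin m) (Fin n) ℝ) (C : Matrix (Fin n) (Fin p) ℝ) :
    ((Fin A.rank → ℝ) × (Fin C.rank → ℝ) × (Fin (gam A C) → ℝ)) →ₗ[ℝ] (Fin n → ℝ) :=
  ((Usub A).subtype ∘ₗ (eU A).toLinearMap ∘ₗ LinearMap.fst ℝ _ _)
  + ((Vsub C).subtype ∘ₗ (eV C).toLinearMap ∘ₗ (LinearMap.fst ℝ _ _ ∘ₗ LinearMap.snd ℝ _ _))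
  + ((Wsub A C).subtype ∘ₗ (eW A C).toLinearMap ∘ₗ (LinearMap.snd ℝ _ _ ∘ₗ LinearMap.snd ℝ _ _))

lemma Phi_apply (A : Matrix (Fin m) (Fin n) ℝ) (C : Matrix (Fin n) (Fin p) ℝ) (q) :
    Phi A C q =
      (eU A q.1 : Fin n → ℝ) + (eV C q.2.1 : Fin n → ℝ) + (eW A C q.2.2 : Fin n → ℝ) := rfl

variable {A : Matrix (Fin m) (Fin n) ℝ} {C : Matrix (Fin n) (Fin p) ℝ}

lemma mem_U_iff {u : Fin n → ℝ} : u ∈ Usub A ↔ ∃ y, Aᵀ.mulVec y = u := by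
  simp only [Usub, LinearMap.mem_range, Matrix.mulVecLin_apply]

lemma mem_V_iff {v : Fin n → ℝ} : v ∈ Vsub C ↔ ∃ z, C.mulVec z = v := by
  simp only [Vsub, LinearMap.mem_range, Matrix.mulVecLin_apply]

lemma mem_W_iff {w : Fin n → ℝ} : w ∈ Wsub A C ↔ A.mulVec w = 0 ∧ Cᵀ.mulVec w = 0 := by
  simp only [Wsub, Submodule.mem_inf, LinearMap.mem_ker, Matrix.mulVecLin_apply]

lemma dot_UW {u w : Fin n → ℝ} (hu : u ∈ Usub A) (hw : A.mulVec w = 0) : u ⬝ᵥ w = 0 := by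
  obtain ⟨y, rfl⟩ := mem_U_iff.mp hu
  rw [mulVec_transpose, ← dotProduct_mulVec, hw, dotProduct_zero]

lemma dot_VW {v w : Fin n → ℝ} (hv : v ∈ Vsub C) (hw : Cᵀ.mulVec w = 0) : v ⬝ᵥ w = 0 := by
  obtain ⟨z, rfl⟩ := mem_V_iff.mp hv
  rw [dotProduct_comm, dotProduct_mulVec, ← mulVec_transpose, hw, zero_dotProduct]

lemma V_subset_kerA (hAC : A * C = 0) {v : Fin n → ℝ} (hv : v ∈ Vsub C) : A.mulVec v = 0 := by
  obtain ⟨z, rfl⟩ := mem_V_iff.mp hv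
  rw [mulVec_mulVec, hAC, zero_mulVec]

lemma U_subset_kerCt (hAC : A * C = 0) {u : Fin n → ℝ} (hu : u ∈ Usub A) :
    Cᵀ.mulVec u = 0 := by
  obtain ⟨y, rfl⟩ := mem_U_iff.mp hu
  rw [mulVec_mulVec, ← transpose_mul, hAC, transpose_zero, zero_mulVec]

lemma dot_UV (hAC : A * C = 0) {u v : Fin n → ℝ} (hu : u ∈ Usub A) (hv : v ∈ Vsub C) :
    u ⬝ᵥ v = 0 :=
  dot_UW hu (V_subset_kerA hAC hv)

lemma U_inter_kerA {u : Fin n → ℝ} (hu : u ∈ Usub A) (h : A.mulVec u = 0) : u = 0 := by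
  have := dot_UW hu h
  rwa [dotProduct_self_eq_zero] at this

lemma V_inter_kerCt {v : Fin n → ℝ} (hv : v ∈ Vsub C) (h : Cᵀ.mulVec v = 0) : v = 0 := by
  have := dot_VW hv h
  rwa [dotProduct_self_eq_zero] at this

lemma triple_eq_zero (hAC : A * C = 0) {u v w : Fin n → ℝ}
    (hu : u ∈ Usub A) (hv : v ∈ Vsub C) (hw : w ∈ Wsub A C)
    (h : u + v + w = 0) : u = 0 ∧ v = 0 ∧ w = 0 := by
  obtain ⟨hwA, hwC⟩ := mem_W_iff.mp hw
  have hu0 : u = 0 := by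
    have h1 : u ⬝ᵥ (u + v + w) = 0 := by rw [h, dotProduct_zero]
    rw [dotProduct_add, dotProduct_add, dot_UV hAC hu hv, dot_UW hu hwA, add_zero,
      add_zero, dotProduct_self_eq_zero] at h1
    exact h1
  subst hu0
  rw [zero_add] at h
  have hv0 : v = 0 := by
    have h1 : v ⬝ᵥ (v + w) = 0 := by rw [h, dotProduct_zero]
    rw [dotProduct_add, dot_VW hv hwC, add_zero, dotProduct_self_eq_zero] at h1
    exact h1
  subst hv0
  rw [zero_add] at h
  exact ⟨rfl, rfl, h⟩

lemma phi_inj (hAC : A * C = 0) : Function.Injective (Phi A C) := by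
  rw [← LinearMap.ker_eq_bot, LinearMap.ker_eq_bot']
  intro q hq
  rw [Phi_apply] at hq
  obtain ⟨h1, h2, h3⟩ := triple_eq_zero hAC (eU A q.1).2 (eV C q.2.1).2 (eW A C q.2.2).2 hq
  have e1 : q.1 = 0 := (LinearEquiv.map_eq_zero_iff _).mp (Subtype.ext h1)
  have e2 : q.2.1 = 0 := (LinearEquiv.map_eq_zero_iff _).mp (Subtype.ext h2)
  have e3 : q.2.2 = 0 := (LinearEquiv.map_eq_zero_iff _).mp (Subtype.ext h3)
  exact Prod.ext e1 (Prod.ext e2 e3)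

lemma rank_add_gam (hAC : A * C = 0) : A.rank + C.rank + gam A C = n := by
  have hfr : finrank ℝ ((Fin A.rank → ℝ) × (Fin C.rank → ℝ) × (Fin (gam A C) → ℝ))
      = A.rank + C.rank + gam A C := by
    simp [Module.finrank_prod, Module.finrank_fin_fun, Nat.add_assoc]
  have hle : A.rank + C.rank + gam A C ≤ n := by
    have h1 : finrank ℝ (LinearMap.range (Phi A C)) = A.rank + C.rank + gam A C := by
      rw [LinearMap.finrank_range_of_inj (phi_inj hAC), hfr]
    have h2 := Submodule.finrank_le (LinearMap.range (Phi A C))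
    rw [h1, Module.finrank_fin_fun] at h2
    exact h2
  have hA : A.rank + finrank ℝ (LinearMap.ker A.mulVecLin) = n := by
    have := LinearMap.finrank_range_add_finrank_ker A.mulVecLin
    rwa [Module.finrank_fin_fun] at this
  have hC : C.rank + finrank ℝ (LinearMap.ker Cᵀ.mulVecLin) = n := by
    have := LinearMap.finrank_range_add_finrank_ker Cᵀ.mulVecLin
    rw [Module.finrank_fin_fun] at this
    rwa [show finrank ℝ (LinearMap.range Cᵀ.mulVecLin) = C.rank from C.rank_transpose] at this
  have hsup := Submodule.finrank_sup_add_finrank_inf_eq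
    (LinearMap.ker A.mulVecLin) (LinearMap.ker Cᵀ.mulVecLin)
  have hsuple := Submodule.finrank_le
    (LinearMap.ker A.mulVecLin ⊔ LinearMap.ker Cᵀ.mulVecLin)
  rw [Module.finrank_fin_fun] at hsuple
  have hg : finrank ℝ ((LinearMap.ker A.mulVecLin ⊓ LinearMap.ker Cᵀ.mulVecLin :
      Submodule ℝ (Fin n → ℝ))) = gam A C := rfl
  omega

lemma phi_surj (hAC : A * C = 0) : Function.Surjective (Phi A C) := by
  rw [← LinearMap.range_eq_top]
  apply Submodule.eq_top_of_finrank_eq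
  rw [LinearMap.finrank_range_of_inj (phi_inj hAC), Module.finrank_fin_fun]
  simp only [Module.finrank_prod, Module.finrank_fin_fun, ← Nat.add_assoc]
  exact rank_add_gam hAC

def PhiE (hAC : A * C = 0) :
    ((Fin A.rank → ℝ) × (Fin C.rank → ℝ) × (Fin (gam A C) → ℝ)) ≃ₗ[ℝ] (Fin n → ℝ) :=
  LinearEquiv.ofBijective (Phi A C) ⟨phi_inj hAC, phi_surj hAC⟩

lemma PhiE_apply (hAC : A * C = 0) (q) : PhiE hAC q =
    (eU A q.1 : Fin n → ℝ) + (eV C q.2.1 : Fin n → ℝ) + (eW A C q.2.2 : Fin n → ℝ) := rfl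

lemma mulVecA_PhiE (hAC : A * C = 0) (q) :
    A.mulVec (PhiE hAC q) = A.mulVec (eU A q.1 : Fin n → ℝ) := by
  rw [PhiE_apply, mulVec_add, mulVec_add, V_subset_kerA hAC (eV C q.2.1).2,
    (mem_W_iff.mp (eW A C q.2.2).2).1, add_zero, add_zero]

lemma mulVecCt_PhiE (hAC : A * C = 0) (q) :
    Cᵀ.mulVec (PhiE hAC q) = Cᵀ.mulVec (eV C q.2.1 : Fin n → ℝ) := by
  rw [PhiE_apply, mulVec_add, mulVec_add, U_subset_kerCt hAC (eU A q.1).2,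
    (mem_W_iff.mp (eW A C q.2.2).2).2, zero_add, add_zero]

end

end SimplicialAux

open SimplicialAux

/-- The conjugacy class of the vector fields `θ ↦ Aᵀ f (A θ) + C g (Cᵀ θ)` (with `A * C = 0`)
is exactly the class of `(rank A, rank C, n)`-vector fields. -/
theorem conjugacy_class_of_simplicial_vector_fields {m n p : ℕ}
    (A : Matrix (Fin m) (Fin n) ℝ) (C : Matrix (Fin n) (Fin p) ℝ)
    (hAC : A * C = 0) :
    (∀ (f : (Fin m → ℝ) → (Fin m → ℝ)) (g : (Fin p → ℝ) → (Fin p → ℝ)),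
      ∃ H : (Fin n → ℝ) → (Fin n → ℝ), IsABNVectorField A.rank C.rank n H ∧
        LinearlyConjugate n
          (fun θ => Aᵀ.mulVec (f (A.mulVec θ)) + C.mulVec (g (Cᵀ.mulVec θ))) H) ∧
    (∀ H : (Fin n → ℝ) → (Fin n → ℝ), IsABNVectorField A.rank C.rank n H →
      ∃ (f : (Fin m → ℝ) → (Fin m → ℝ)) (g : (Fin p → ℝ) → (Fin p → ℝ)),
        LinearlyConjugate n
          (fun θ => Aᵀ.mulVec (f (A.mulVec θ)) + C.mulVec (g (Cᵀ.mulVec θ))) H) := by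
  classical
  have hsum : A.rank + C.rank + gam A C = n := rank_add_gam hAC
  set S := splitEquiv hsum with hS
  set Φ := PhiE hAC with hΦ
  set M : (Fin n → ℝ) ≃ₗ[ℝ] (Fin n → ℝ) := (S.trans Φ).symm with hM
  have hMsymm : ∀ x, M.symm x = Φ (S x) := fun x => rfl
  have hMapp : ∀ y, M y = S.symm (Φ.symm y) := fun y => rfl
  constructor
  · -- part (a)
    intro f g
    set G : (Fin n → ℝ) → (Fin n → ℝ) :=
      fun θ => Aᵀ.mulVec (f (A.mulVec θ)) + C.mulVec (g (Cᵀ.mulVec θ)) with hG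
    set H₁ : (Fin A.rank → ℝ) → (Fin A.rank → ℝ) := fun a =>
      (eU A).symm ⟨Aᵀ.mulVec (f (A.mulVec ((eU A) a : Fin n → ℝ))),
        mem_U_iff.mpr ⟨_, rfl⟩⟩ with hH₁
    set H₂ : (Fin C.rank → ℝ) → (Fin C.rank → ℝ) := fun b =>
      (eV C).symm ⟨C.mulVec (g (Cᵀ.mulVec ((eV C) b : Fin n → ℝ))),
        mem_V_iff.mpr ⟨_, rfl⟩⟩ with hH₂
    have hkey : ∀ q, Φ.symm (G (Φ q)) = (H₁ q.1, H₂ q.2.1, 0) := by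
      intro q
      rw [LinearEquiv.symm_apply_eq]
      show G (Φ q) = Φ (H₁ q.1, H₂ q.2.1, 0)
      rw [hΦ, PhiE_apply]
      show G (Φ q) = ((eU A) (H₁ q.1) : Fin n → ℝ) + ((eV C) (H₂ q.2.1) : Fin n → ℝ)
        + ((eW A C) 0 : Fin n → ℝ)
      rw [hH₁, hH₂, LinearEquiv.apply_symm_apply, LinearEquiv.apply_symm_apply, map_zero]
      show G (Φ q) = Aᵀ.mulVec (f (A.mulVec ((eU A) q.1 : Fin n → ℝ)))
        + C.mulVec (g (Cᵀ.mulVec ((eV C) q.2.1 : Fin n → ℝ))) + 0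
      rw [add_zero, hG]
      show Aᵀ.mulVec (f (A.mulVec (Φ q))) + C.mulVec (g (Cᵀ.mulVec (Φ q))) = _
      rw [hΦ, mulVecA_PhiE hAC, mulVecCt_PhiE hAC]
    have hHx : ∀ x, M (G (M.symm x)) = S.symm (H₁ (S x).1, H₂ (S x).2.1, 0) := by
      intro x
      rw [hMapp, hMsymm, hkey]
    refine ⟨fun x => M (G (M.symm x)), ⟨gam A C, hsum, H₁, H₂, fun x => ?_⟩,
      ⟨M, fun x => rfl⟩⟩
    have hfst : (S x).1 = fun j => x (Fin.cast hsum ((j.castAdd C.rank).castAdd (gam A C))) :=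
      funext fun j => splitEquiv_apply_fst hsum x j
    have hsnd : (S x).2.1 = fun j => x (Fin.cast hsum ((j.natAdd A.rank).castAdd (gam A C))) :=
      funext fun j => splitEquiv_apply_snd hsum x j
    refine ⟨fun i => ?_, fun i => ?_, fun i => ?_⟩
    · change M (G (M.symm x)) _ = _
      rw [hHx, splitEquiv_symm_fst, hfst]
    · change M (G (M.symm x)) _ = _
      rw [hHx, splitEquiv_symm_snd, hsnd]
    · change M (G (M.symm x)) _ = _
      rw [hHx, splitEquiv_symm_thd]
      rfl
  · -- part (b)
    intro H hH
    obtain ⟨γ', hγ', H₁, H₂, hprop⟩ := hH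
    have hγγ : γ' = gam A C := by omega
    subst hγγ
    set LA : (Fin A.rank → ℝ) →ₗ[ℝ] (Fin m → ℝ) :=
      A.mulVecLin ∘ₗ ((Usub A).subtype ∘ₗ (eU A).toLinearMap) with hLA
    have hLAker : LinearMap.ker LA = ⊥ := by
      rw [LinearMap.ker_eq_bot']
      intro a ha
      have h0 : A.mulVec ((eU A) a : Fin n → ℝ) = 0 := ha
      have h1 := U_inter_kerA ((eU A) a).2 h0
      exact (LinearEquiv.map_eq_zero_iff _).mp (Subtype.ext h1)
    obtain ⟨P, hP⟩ := LA.exists_leftInverse_of_injective hLAker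
    obtain ⟨T, hT⟩ := (Aᵀ.mulVecLin.rangeRestrict).exists_rightInverse_of_surjective
      (LinearMap.range_eq_top.mpr Aᵀ.mulVecLin.surjective_rangeRestrict)
    set LC : (Fin C.rank → ℝ) →ₗ[ℝ] (Fin p → ℝ) :=
      Cᵀ.mulVecLin ∘ₗ ((Vsub C).subtype ∘ₗ (eV C).toLinearMap) with hLC
    have hLCker : LinearMap.ker LC = ⊥ := by
      rw [LinearMap.ker_eq_bot']
      intro b hb
      have h0 : Cᵀ.mulVec ((eV C) b : Fin n → ℝ) = 0 := hb
      have h1 := V_inter_kerCt ((eV C) b).2 h0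
      exact (LinearEquiv.map_eq_zero_iff _).mp (Subtype.ext h1)
    obtain ⟨P', hP'⟩ := LC.exists_leftInverse_of_injective hLCker
    obtain ⟨T', hT'⟩ := (C.mulVecLin.rangeRestrict).exists_rightInverse_of_surjective
      (LinearMap.range_eq_top.mpr C.mulVecLin.surjective_rangeRestrict)
    have hTcoe : ∀ u : Usub A, Aᵀ.mulVec (T u) = (u : Fin n → ℝ) := by
      intro u
      have h1 := LinearMap.congr_fun hT u
      exact congrArg Subtype.val h1
    have hT'coe : ∀ v : Vsub C, C.mulVec (T' v) = (v : Fin n → ℝ) := by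
      intro v
      have h1 := LinearMap.congr_fun hT' v
      exact congrArg Subtype.val h1
    refine ⟨fun y => T ((eU A) (H₁ (P y))), fun z => T' ((eV C) (H₂ (P' z))), M, fun x => ?_⟩
    set G : (Fin n → ℝ) → (Fin n → ℝ) := fun θ =>
      Aᵀ.mulVec ((fun y => T ((eU A) (H₁ (P y)))) (A.mulVec θ))
      + C.mulVec ((fun z => T' ((eV C) (H₂ (P' z)))) (Cᵀ.mulVec θ)) with hGdef
    show H x = M (G (M.symm x))
    have hkey : ∀ q, Φ.symm (G (Φ q)) = (H₁ q.1, H₂ q.2.1, 0) := by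
      intro q
      rw [LinearEquiv.symm_apply_eq]
      show G (Φ q) = Φ (H₁ q.1, H₂ q.2.1, 0)
      rw [hGdef]
      show Aᵀ.mulVec (T ((eU A) (H₁ (P (A.mulVec (Φ q))))))
        + C.mulVec (T' ((eV C) (H₂ (P' (Cᵀ.mulVec (Φ q)))))) = _
      rw [hΦ, mulVecA_PhiE hAC, mulVecCt_PhiE hAC]
      have h1 : P (A.mulVec ((eU A) q.1 : Fin n → ℝ)) = q.1 := LinearMap.congr_fun hP q.1
      have h2 : P' (Cᵀ.mulVec ((eV C) q.2.1 : Fin n → ℝ)) = q.2.1 :=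
        LinearMap.congr_fun hP' q.2.1
      rw [h1, h2, hTcoe, hT'coe, PhiE_apply]
      show _ = ((eU A) (H₁ q.1) : Fin n → ℝ) + ((eV C) (H₂ q.2.1) : Fin n → ℝ)
        + ((eW A C) 0 : Fin n → ℝ)
      rw [map_zero]
      show _ = ((eU A) (H₁ q.1) : Fin n → ℝ) + ((eV C) (H₂ q.2.1) : Fin n → ℝ) + 0
      rw [add_zero]
    have hHx : M (G (M.symm x)) = S.symm (H₁ (S x).1, H₂ (S x).2.1, 0) := by
      rw [hMapp, hMsymm, hkey]
    rw [hHx]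
    have hfst : (S x).1 = fun j => x (Fin.cast hγ' ((j.castAdd C.rank).castAdd (gam A C))) :=
      funext fun j => splitEquiv_apply_fst hsum x j
    have hsnd : (S x).2.1 = fun j => x (Fin.cast hγ' ((j.natAdd A.rank).castAdd (gam A C))) :=
      funext fun j => splitEquiv_apply_snd hsum x j
    funext j
    obtain ⟨s, rfl⟩ := (idxEquiv hsum).surjective j
    obtain ⟨hp1, hp2, hp3⟩ := hprop x
    rcases s with i | i | i
    · rw [idxEquiv_inl hsum i, splitEquiv_symm_fst, hfst]
      exact hp1 i
    · rw [idxEquiv_inr_inl hsum i, splitEquiv_symm_snd, hsnd]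
      exact hp2 i
    · rw [idxEquiv_inr_inr hsum i, splitEquiv_symm_thd]
      exact hp3 i
end

section
/- Let B be an m×n real matrix, f : (Fin n → ℝ) → (Fin n → ℝ) a function, and define g : (Fin m → ℝ) → (Fin m → ℝ) by g(θ) = B.mulVec (f (Bᵀ.mulVec θ)). Let P denote the orthogonal projection of Fin n → ℝ onto range(x ↦ Bᵀ.mulVec x). Then: (i) range(x ↦ B.mulVec x) is invariant under g; (ii) the linear map x ↦ Bᵀ.mulVec x restricts to a linear isomorphism φ from range(x ↦ B.mulVec x) onto range(x ↦ Bᵀ.mulVec x), and Bᵀ.mulVec (g θ) = (Bᵀ * B).mulVec (f (Bᵀ.mulVec θ)) for all θ, so φ conjugates g restricted to range(B.mulVec) to the map x ↦ (Bᵀ * B).mulVec (f x) restricted to range(Bᵀ.mulVec); (iii) the linear map y ↦ B.mulVec y restricts to a linear isomorphism ψ from range(x ↦ Bᵀ.mulVec x) onto range(x ↦ B.mulVec x), and g(B.mulVec y) = B.mulVec (P (f ((Bᵀ * B).mulVec y))) for all y, so ψ conjugates the map y ↦ P (f ((Bᵀ * B).mulVec y)) restricted to range(Bᵀ.mulVec)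 to g restricted to range(B.mulVec). -/
open Matrix

private lemma range_tmul {m n : ℕ} (B : Matrix (Fin m) (Fin n) ℝ) :
    LinearMap.range (Bᵀ * B).mulVecLin = LinearMap.range Bᵀ.mulVecLin := by
  apply Submodule.eq_of_le_of_finrank_eq
  · rw [mulVecLin_mul]
    exact LinearMap.range_comp_le_range _ _
  · change (Bᵀ * B).rank = Bᵀ.rank
    rw [rank_transpose_mul_self, rank_transpose]

private lemma range_mult {m n : ℕ} (B : Matrix (Fin m) (Fin n) ℝ) :
    LinearMap.range (B * Bᵀ).mulVecLin = LinearMap.range B.mulVecLin := by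
  apply Submodule.eq_of_le_of_finrank_eq
  · rw [mulVecLin_mul]
    exact LinearMap.range_comp_le_range _ _
  · change (B * Bᵀ).rank = B.rank
    rw [rank_self_mul_transpose]

private lemma tmul_vec_zero {m n : ℕ} (B : Matrix (Fin m) (Fin n) ℝ) (v : Fin n → ℝ)
    (h : (Bᵀ * B) *ᵥ v = 0) : B *ᵥ v = 0 := by
  have := Matrix.conjTranspose_mul_self_mulVec_eq_zero (R := ℝ) B v
  rw [conjTranspose_eq_transpose_of_trivial] at this
  rwa [this] at h

private lemma mult_vec_zero {m n : ℕ} (B : Matrix (Fin m) (Fin n) ℝ) (v : Fin m → ℝ)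
    (h : (B * Bᵀ) *ᵥ v = 0) : Bᵀ *ᵥ v = 0 := by
  have := Matrix.self_mul_conjTranspose_mulVec_eq_zero (R := ℝ) B v
  rw [conjTranspose_eq_transpose_of_trivial] at this
  rwa [this] at h

/-- Conjugacies via the Laplacian.  For `g θ = B (f (Bᵀ θ))` and `P` the orthogonal projection
onto `range Bᵀ`: (i) `range B` is invariant under `g`; (ii) `Bᵀ` restricts to a bijection from
`range B` onto `range Bᵀ` and `Bᵀ (g θ) = (Bᵀ * B) (f (Bᵀ θ))`; (iii) `B` restricts to a
bijection from `range Bᵀ` onto `range B` and `g (B y) = B (P (f ((Bᵀ * B) y)))`. -/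
theorem laplacian_conjugacies {m n : ℕ} (B : Matrix (Fin m) (Fin n) ℝ)
    (f : (Fin n → ℝ) → (Fin n → ℝ))
    (P : (Fin n → ℝ) → (Fin n → ℝ))
    (hP : ∀ v : Fin n → ℝ, P v ∈ LinearMap.range Bᵀ.mulVecLin ∧
      ∀ u ∈ LinearMap.range Bᵀ.mulVecLin, (v - P v) ⬝ᵥ u = 0) :
    (∀ θ : Fin m → ℝ, B.mulVec (f (Bᵀ.mulVec θ)) ∈ LinearMap.range B.mulVecLin) ∧
    Set.BijOn (Bᵀ.mulVec)
      (LinearMap.range B.mulVecLin : Set (Fin m → ℝ))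
      (LinearMap.range Bᵀ.mulVecLin : Set (Fin n → ℝ)) ∧
    (∀ θ : Fin m → ℝ,
      Bᵀ.mulVec (B.mulVec (f (Bᵀ.mulVec θ))) = (Bᵀ * B).mulVec (f (Bᵀ.mulVec θ))) ∧
    Set.BijOn (B.mulVec)
      (LinearMap.range Bᵀ.mulVecLin : Set (Fin n → ℝ))
      (LinearMap.range B.mulVecLin : Set (Fin m → ℝ)) ∧
    (∀ y : Fin n → ℝ,
      B.mulVec (f (Bᵀ.mulVec (B.mulVec y))) = B.mulVec (P (f ((Bᵀ * B).mulVec y)))) := by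
  refine ⟨fun θ => ⟨f (Bᵀ.mulVec θ), rfl⟩, ⟨?_, ?_, ?_⟩, fun θ => mulVec_mulVec _ _ _,
    ⟨?_, ?_, ?_⟩, ?_⟩
  · rintro x ⟨w, rfl⟩
    exact ⟨B *ᵥ w, rfl⟩
  · rintro x ⟨w, rfl⟩ y ⟨v, rfl⟩ h
    simp only [mulVecLin_apply] at *
    have h2 : (Bᵀ * B) *ᵥ (w - v) = 0 := by
      rw [mulVec_sub, ← mulVec_mulVec, ← mulVec_mulVec, h, sub_self]
    have := tmul_vec_zero B (w - v) h2
    rw [mulVec_sub, sub_eq_zero] at this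
    exact this
  · rintro x hx
    rw [← range_tmul] at hx
    obtain ⟨w, rfl⟩ := hx
    exact ⟨B *ᵥ w, ⟨w, rfl⟩, mulVec_mulVec _ _ _⟩
  · rintro x ⟨w, rfl⟩
    exact ⟨Bᵀ *ᵥ w, rfl⟩
  · rintro x ⟨w, rfl⟩ y ⟨v, rfl⟩ h
    simp only [mulVecLin_apply] at *
    have h2 : (B * Bᵀ) *ᵥ (w - v) = 0 := by
      rw [mulVec_sub, ← mulVec_mulVec, ← mulVec_mulVec, h, sub_self]
    have := mult_vec_zero B (w - v) h2
    rw [mulVec_sub, sub_eq_zero] at this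
    exact this
  · rintro x hx
    rw [← range_mult] at hx
    obtain ⟨w, rfl⟩ := hx
    exact ⟨Bᵀ *ᵥ w, ⟨w, rfl⟩, mulVec_mulVec _ _ _⟩
  · intro y
    set v := f ((Bᵀ * B).mulVec y) with hv
    have hBy : Bᵀ.mulVec (B.mulVec y) = (Bᵀ * B).mulVec y := mulVec_mulVec _ _ _
    rw [hBy]
    have hz : B *ᵥ (v - P v) = 0 := by
      funext i
      have := (hP v).2 (Bᵀ *ᵥ Pi.single i 1) ⟨Pi.single i 1, rfl⟩
      rw [dotProduct_mulVec, ← mulVec_transpose, transpose_transpose] at this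
      simpa [mulVec, dotProduct, Pi.single_apply, mul_ite, Finset.sum_ite_eq'] using this
    rw [mulVec_sub, sub_eq_zero] at hz
    exact hz
end

section
/- Let L and A be n×n real matrices with L symmetric positive definite and A symmetric. Then the matrix L * A has only real eigenvalues: its characteristic polynomial over ℝ has exactly n roots counted with multiplicity. Moreover, the number of positive roots, the number of zero roots, and the number of negative roots of the characteristic polynomial of L * A, each counted with multiplicity, equal respectively the number of positive, zero and negative roots (counted with multiplicity) of the characteristic polynomial of A. -/
/-!
Factor `L = Bᵀ B` with `B` invertible. Then `L A = Bᵀ (B A)` has the same characteristic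
polynomial as `B A Bᵀ`, which is symmetric, so its characteristic polynomial splits over `ℝ`,
and it is congruent to `A`. Through an orthonormal eigenbasis, the quadratic form of a symmetric
matrix is equivalent to the weighted sum of squares with the eigenvalues as weights, so by
Sylvester's law of inertia (`sigPos`, `sigNeg`) congruent symmetric matrices have the same
numbers of positive and of negative eigenvalues; the zero counts then agree because both have
`n` eigenvalues.
-/

open Matrix QuadraticMap QuadraticForm

lemma Multiset.card_filter_lt_add_card_filter_eq_add_card_filter_gt {α : Type*} [LinearOrder α]
    (s : Multiset α) (a : α) :
    card (s.filter (a < ·)) + card (s.filter (· = a)) + card (s.filter (· < a)) = card s := by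
  induction s using Multiset.induction_on with
  | empty => simp
  | cons x s ih =>
    rcases lt_trichotomy x a with h | rfl | h
    · simp [h, h.not_gt, h.ne]; omega
    · simp; omega
    · simp [h, h.not_gt, h.ne']; omega

namespace Matrix

variable {ι : Type*} [Fintype ι]

lemma IsHermitian.transpose_mul_mul {A : Matrix ι ι ℝ} (hA : A.IsHermitian)
    (S : Matrix ι ι ℝ) : (Sᵀ * A * S).IsHermitian := by
  simpa [conjTranspose_eq_transpose_of_trivial] using isHermitian_conjTranspose_mul_mul S hA

variable [DecidableEq ι]

lemma toQuadraticForm'_transpose_mul_mul {R : Type*} [CommRing R] (A S : Matrix ι ι R) :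
    toQuadraticForm' (Sᵀ * A * S) = (toQuadraticForm' A).comp (toLin' S) := by
  ext v
  simp [toQuadraticForm', ← toLinearMap₂'_comp]

lemma toQuadraticForm'_diagonal {R : Type*} [CommRing R] (d : ι → R) :
    toQuadraticForm' (diagonal d) = weightedSumSquares R d := by
  ext v
  simp only [toQuadraticForm', LinearMap.BilinMap.toQuadraticMap_apply, toLinearMap₂'_apply',
    dotProduct, mulVec_diagonal, weightedSumSquares_apply, smul_eq_mul]
  exact Finset.sum_congr rfl fun i _ => by ring

lemma equivalent_toQuadraticForm'_transpose_mul_mul {R : Type*} [CommRing R] (A : Matrix ι ι R)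
    {S : Matrix ι ι R} (hS : IsUnit S) :
    (toQuadraticForm' A).Equivalent (toQuadraticForm' (Sᵀ * A * S)) := by
  let := hS.invertible
  rw [toQuadraticForm'_transpose_mul_mul]
  exact ⟨isometryEquivOfCompLinearEquiv _ (toLinearEquiv' S ‹_›)⟩

namespace IsHermitian

variable {A : Matrix ι ι ℝ}

lemma equivalent_weightedSumSquares (hA : A.IsHermitian) :
    (toQuadraticForm' A).Equivalent (weightedSumSquares ℝ hA.eigenvalues) := by
  set U : Matrix ι ι ℝ := (hA.eigenvectorUnitary : Matrix ι ι ℝ)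
  have hdiag : Uᵀ * A * U = diagonal hA.eigenvalues := by
    simpa [U, star_eq_conjTranspose] using hA.conjStarAlgAut_star_eigenvectorUnitary
  rw [← toQuadraticForm'_diagonal, ← hdiag]
  exact equivalent_toQuadraticForm'_transpose_mul_mul A Unitary.isUnit_coe

lemma card_filter_roots_charpoly (hA : A.IsHermitian) (p : ℝ → Prop) [DecidablePred p] :
    Multiset.card (A.charpoly.roots.filter p) = {i | p (hA.eigenvalues i)}.ncard := by
  rw [hA.roots_charpoly_eq_eigenvalues]
  simp [Multiset.filter_map, Set.ncard_eq_toFinset_card']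
  rfl

lemma sigPos_toQuadraticForm' (hA : A.IsHermitian) :
    sigPos (toQuadraticForm' A) = Multiset.card (A.charpoly.roots.filter (0 < ·)) := by
  rw [hA.card_filter_roots_charpoly]
  exact sigPos_of_equiv_weightedSumSquares hA.equivalent_weightedSumSquares

lemma sigNeg_toQuadraticForm' (hA : A.IsHermitian) :
    sigNeg (toQuadraticForm' A) = Multiset.card (A.charpoly.roots.filter (· < 0)) := by
  rw [hA.card_filter_roots_charpoly]
  exact sigNeg_of_equiv_weightedSumSquares hA.equivalent_weightedSumSquares

lemma card_roots_charpoly (hA : A.IsHermitian) :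
    Multiset.card A.charpoly.roots = Fintype.card ι := by
  simp [hA.roots_charpoly_eq_eigenvalues]

theorem inertia_transpose_mul_mul (hA : A.IsHermitian) {S : Matrix ι ι ℝ} (hS : IsUnit S) :
    Multiset.card ((Sᵀ * A * S).charpoly.roots.filter (0 < ·)) =
      Multiset.card (A.charpoly.roots.filter (0 < ·)) ∧
    Multiset.card ((Sᵀ * A * S).charpoly.roots.filter (· = 0)) =
      Multiset.card (A.charpoly.roots.filter (· = 0)) ∧
    Multiset.card ((Sᵀ * A * S).charpoly.roots.filter (· < 0)) =
      Multiset.card (A.charpoly.roots.filter (· < 0)) := by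
  have hB := hA.transpose_mul_mul S
  have hQ := (equivalent_toQuadraticForm'_transpose_mul_mul A hS).symm
  have hpos := hQ.sigPos_eq
  have hneg := hQ.sigNeg_eq
  rw [hA.sigPos_toQuadraticForm', hB.sigPos_toQuadraticForm'] at hpos
  rw [hA.sigNeg_toQuadraticForm', hB.sigNeg_toQuadraticForm'] at hneg
  have hA_card := A.charpoly.roots.card_filter_lt_add_card_filter_eq_add_card_filter_gt 0
  have hB_card :=
    (Sᵀ * A * S).charpoly.roots.card_filter_lt_add_card_filter_eq_add_card_filter_gt 0
  rw [hA.card_roots_charpoly] at hA_card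
  rw [hB.card_roots_charpoly] at hB_card
  exact ⟨hpos, by omega, hneg⟩

end IsHermitian

open scoped ComplexOrder MatrixOrder in
lemma PosDef.exists_isUnit_eq_conjTranspose_mul_self {𝕜 : Type*} [RCLike 𝕜]
    {L : Matrix ι ι 𝕜} (hL : L.PosDef) :
    ∃ B : Matrix ι ι 𝕜, IsUnit B ∧ L = Bᴴ * B :=
  CStarAlgebra.isStrictlyPositive_iff_eq_star_mul_self.mp hL.isStrictlyPositive

end Matrix

/-- **Sylvester-type inertia result.**  If `L` is symmetric positive definite and `A` is
symmetric, then the characteristic polynomial of `L * A` has exactly `n` real roots counted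
with multiplicity, and the numbers of positive, zero and negative roots (with multiplicity)
agree with those of the characteristic polynomial of `A`. -/
theorem inertia_of_posdef_mul_symmetric {n : ℕ} (L A : Matrix (Fin n) (Fin n) ℝ)
    (hLsymm : Lᵀ = L)
    (hLpos : ∀ v : Fin n → ℝ, v ≠ 0 → 0 < L.mulVec v ⬝ᵥ v)
    (hAsymm : Aᵀ = A) :
    Multiset.card (L * A).charpoly.roots = n ∧
    Multiset.card ((L * A).charpoly.roots.filter fun x => 0 < x) =
      Multiset.card (A.charpoly.roots.filter fun x => 0 < x) ∧
    Multiset.card ((L * A).charpoly.roots.filter fun x => x = 0) =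
      Multiset.card (A.charpoly.roots.filter fun x => x = 0) ∧
    Multiset.card ((L * A).charpoly.roots.filter fun x => x < 0) =
      Multiset.card (A.charpoly.roots.filter fun x => x < 0) := by
  have hA : A.IsHermitian := by rwa [IsHermitian, conjTranspose_eq_transpose_of_trivial]
  have hL : L.PosDef := .of_dotProduct_mulVec_pos
    (by rwa [IsHermitian, conjTranspose_eq_transpose_of_trivial])
    fun v hv => by simpa [dotProduct_comm] using hLpos v hv
  obtain ⟨B, hB, rfl⟩ := hL.exists_isUnit_eq_conjTranspose_mul_self
  have hchar : (Bᴴ * B * A).charpoly = (Bᵀᵀ * A * Bᵀ).charpoly := by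
    rw [mul_assoc, charpoly_mul_comm, transpose_transpose, conjTranspose_eq_transpose_of_trivial]
  rw [hchar]
  exact ⟨by simpa using (hA.transpose_mul_mul Bᵀ).card_roots_charpoly,
    hA.inertia_transpose_mul_mul (B.isUnit_transpose.2 hB)⟩
end

section
/- Let B be an m×n real matrix such that the linear map x ↦ B.mulVec x is injective, and let f : (Fin n → ℝ) → (Fin n → ℝ) be any function. Then the map θ ↦ Bᵀ.mulVec θ restricts to a bijection from the set {θ ∈ range(x ↦ B.mulVec x) | B.mulVec (f (Bᵀ.mulVec θ)) = 0} onto the set {x : Fin n → ℝ | f x = 0}. -/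
open Matrix

lemma gram_inj {m n : ℕ} (B : Matrix (Fin m) (Fin n) ℝ)
    (hB : Function.Injective fun x : Fin n → ℝ => B.mulVec x) :
    Function.Injective (Bᵀ * B).mulVecLin := by
  rw [← LinearMap.ker_eq_bot, LinearMap.ker_eq_bot']
  intro v hv
  simp only [mulVecLin_apply, ← mulVec_mulVec] at hv
  have h0 : B.mulVec v ⬝ᵥ B.mulVec v = 0 := by
    calc B.mulVec v ⬝ᵥ B.mulVec v = v ⬝ᵥ Bᵀ.mulVec (B.mulVec v) := by
          conv_rhs => rw [dotProduct_mulVec, vecMul_transpose]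
      _ = 0 := by rw [hv, dotProduct_zero]
  have hBv : B.mulVec v = 0 := by
    have := (dotProduct_self_eq_zero (v := B.mulVec v)).mp h0
    exact this
  have : B.mulVec v = B.mulVec 0 := by simp [hBv]
  exact hB this

/-- If `x ↦ B.mulVec x` is injective, then `θ ↦ Bᵀ.mulVec θ` restricts to a bijection from the
set of fixed points of `θ ↦ B (f (Bᵀ θ))` lying in `range B` onto the zero set of `f`. -/
theorem fixed_point_bijection {m n : ℕ} (B : Matrix (Fin m) (Fin n) ℝ)
    (hB : Function.Injective fun x : Fin n → ℝ => B.mulVec x)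
    (f : (Fin n → ℝ) → (Fin n → ℝ)) :
    Set.BijOn (Bᵀ.mulVec)
      {θ : Fin m → ℝ | θ ∈ LinearMap.range B.mulVecLin ∧ B.mulVec (f (Bᵀ.mulVec θ)) = 0}
      {x : Fin n → ℝ | f x = 0} := by
  have hgram := gram_inj B hB
  have hBker : ∀ y, B.mulVec y = 0 → y = 0 := by
    intro y hy
    exact hB (by simpa [Matrix.mulVec_zero] using hy : B.mulVec y = B.mulVec 0)
  refine ⟨?_, ?_, ?_⟩
  · rintro θ ⟨-, hθ2⟩
    exact hBker _ hθ2
  · rintro θ₁ ⟨⟨x₁, hx₁⟩, -⟩ θ₂ ⟨⟨x₂, hx₂⟩, -⟩ h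
    simp only [mulVecLin_apply] at hx₁ hx₂
    have : (Bᵀ * B).mulVecLin x₁ = (Bᵀ * B).mulVecLin x₂ := by
      simp only [mulVecLin_apply, ← mulVec_mulVec, hx₁, hx₂]
      exact h
    have hx := hgram this
    rw [← hx₁, ← hx₂, hx]
  · intro x hx
    have hsurj : Function.Surjective (Bᵀ * B).mulVecLin :=
      (LinearMap.injective_iff_surjective).mp hgram
    obtain ⟨z, hz⟩ := hsurj x
    refine ⟨B.mulVec z, ⟨⟨z, rfl⟩, ?_⟩, ?_⟩
    · have hx' : Bᵀ.mulVec (B.mulVec z) = x := by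
        rw [mulVec_mulVec]; exact hz
      rw [hx']
      simp [Set.mem_setOf_eq.mp hx]
    · rw [mulVec_mulVec]; exact hz
end

section
/- Let A be an a×n real matrix and C be an n×p real matrix with A * C = 0, and let f : (Fin a → ℝ) → (Fin a → ℝ) and g : (Fin p → ℝ) → (Fin p → ℝ) be smooth (ContDiff ℝ ⊤) maps. Let Q denote the orthogonal projection of Fin a → ℝ onto range(x ↦ A.mulVec x), and P the orthogonal projection of Fin p → ℝ onto range(y ↦ Cᵀ.mulVec y). Define G : (Fin n → ℝ) → (Fin n → ℝ) by G(θ) = Aᵀ.mulVec (f (A.mulVec θ)) + C.mulVec (g (Cᵀ.mulVec θ)). Then G is a gradient field (there exists a differentiable φ : EuclideanSpace ℝ (Fin n) → ℝ with gradient φ θ = G θ for all θ) if and only if both Q ∘ f ∘ Q and P ∘ g ∘ P are gradient fields (there exist differentiable ψ₁ : EuclideanSpace ℝ (Fin a) → ℝ with gradient ψ₁ x = Q (f (Q x)) for all x, and ψ₂ : EuclideanSpace ℝ (Fin p) → ℝ with gradient ψ₂ y = P (g (P y)) for all y). -/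
open Matrix

open RealInnerProductSpace in
private lemma dot_eq_inner_aux {k : ℕ} (x y : Fin k → ℝ) :
    x ⬝ᵥ y = ⟪(WithLp.toLp 2 x : EuclideanSpace ℝ (Fin k)), (WithLp.toLp 2 y : EuclideanSpace ℝ (Fin k))⟫ := by
  simp [PiLp.inner_apply, RCLike.inner_apply, dotProduct, mul_comm]

open RealInnerProductSpace in
private lemma dot_eq_inner_aux' {k : ℕ} (x y : EuclideanSpace ℝ (Fin k)) :
    ⟪x, y⟫ = WithLp.ofLp x ⬝ᵥ WithLp.ofLp y := by
  simp [PiLp.inner_apply, RCLike.inner_apply, dotProduct, mul_comm]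

private lemma exists_proj_aux {k m : ℕ} (M : Matrix (Fin k) (Fin m) ℝ) :
    ∃ π : (Fin k → ℝ) →ₗ[ℝ] (Fin k → ℝ), ∀ x, π x ∈ LinearMap.range M.mulVecLin ∧
      ∀ u ∈ LinearMap.range M.mulVecLin, (x - π x) ⬝ᵥ u = 0 := by
  let K : Submodule ℝ (EuclideanSpace ℝ (Fin k)) :=
    (LinearMap.range M.mulVecLin).comap (WithLp.linearEquiv 2 ℝ (Fin k → ℝ)).toLinearMap
  let π : (Fin k → ℝ) →ₗ[ℝ] (Fin k → ℝ) :=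
    (WithLp.linearEquiv 2 ℝ (Fin k → ℝ)).toLinearMap ∘ₗ K.subtype ∘ₗ
      (K.orthogonalProjectionOnto : EuclideanSpace ℝ (Fin k) →L[ℝ] K).toLinearMap ∘ₗ
      (WithLp.linearEquiv 2 ℝ (Fin k → ℝ)).symm.toLinearMap
  refine ⟨π, fun x => ⟨(K.orthogonalProjectionOnto (WithLp.toLp 2 x)).2, fun u hu => ?_⟩⟩
  have h := K.sub_starProjection_mem_orthogonal (WithLp.toLp 2 x)
  rw [dot_eq_inner_aux, real_inner_comm]
  exact h (WithLp.toLp 2 u) hu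

private lemma proj_unique_aux {k : ℕ} {K : Submodule ℝ (Fin k → ℝ)} {x v w : Fin k → ℝ}
    (hv : v ∈ K) (hv2 : ∀ u ∈ K, (x - v) ⬝ᵥ u = 0)
    (hw : w ∈ K) (hw2 : ∀ u ∈ K, (x - w) ⬝ᵥ u = 0) : v = w := by
  have key : (v - w) ⬝ᵥ (v - w) = 0 := by
    have h1 := hv2 (v - w) (K.sub_mem hv hw)
    have h2 := hw2 (v - w) (K.sub_mem hv hw)
    rw [sub_dotProduct] at h1 h2 ⊢
    linarith [h1, h2]
  exact sub_eq_zero.mp (dotProduct_self_eq_zero.mp key)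

private lemma perp_range_mulVec_aux {k m : ℕ} (M : Matrix (Fin k) (Fin m) ℝ) (w : Fin k → ℝ)
    (hw : ∀ u ∈ LinearMap.range M.mulVecLin, w ⬝ᵥ u = 0) : Mᵀ *ᵥ w = 0 := by
  have h : (Mᵀ *ᵥ w) ⬝ᵥ (Mᵀ *ᵥ w) = 0 := by
    have h1 : w ⬝ᵥ (M *ᵥ (Mᵀ *ᵥ w)) = 0 := hw _ ⟨Mᵀ *ᵥ w, rfl⟩
    rwa [dotProduct_mulVec, ← mulVec_transpose] at h1
  exact dotProduct_self_eq_zero.mp h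

private lemma hasGradientAt_comp_linear_aux {k m : ℕ}
    (T : EuclideanSpace ℝ (Fin m) →ₗ[ℝ] EuclideanSpace ℝ (Fin k))
    {ψ : EuclideanSpace ℝ (Fin k) → ℝ} {x : EuclideanSpace ℝ (Fin m)}
    {g : EuclideanSpace ℝ (Fin k)}
    (h : HasGradientAt ψ g (T x)) :
    HasGradientAt (fun z => ψ (T z)) (LinearMap.adjoint T g) x := by
  have h1 : HasFDerivAt ψ (InnerProductSpace.toDual ℝ _ g) (T x) :=
    hasGradientAt_iff_hasFDerivAt.1 h
  have hTc : HasFDerivAt (fun z => T z) T.toContinuousLinearMap x :=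
    T.toContinuousLinearMap.hasFDerivAt
  have h2 := h1.comp x hTc
  rw [hasGradientAt_iff_hasFDerivAt]
  refine h2.congr_fderiv ?_
  apply ContinuousLinearMap.ext
  intro v
  simp only [InnerProductSpace.toDual_apply_apply, ContinuousLinearMap.comp_apply,
    LinearMap.coe_toContinuousLinearMap']
  exact (LinearMap.adjoint_inner_left T v g).symm

private lemma hasGradientAt_add_aux {k : ℕ} {f₁ f₂ : EuclideanSpace ℝ (Fin k) → ℝ}
    {g₁ g₂ x : EuclideanSpace ℝ (Fin k)}
    (h₁ : HasGradientAt f₁ g₁ x) (h₂ : HasGradientAt f₂ g₂ x) :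
    HasGradientAt (fun z => f₁ z + f₂ z) (g₁ + g₂) x := by
  rw [hasGradientAt_iff_hasFDerivAt] at *
  rw [map_add]
  exact h₁.add h₂

private lemma forward_aux {a n p : ℕ} (A : Matrix (Fin a) (Fin n) ℝ) (C : Matrix (Fin n) (Fin p) ℝ)
    (hAC : A * C = 0)
    (f : (Fin a → ℝ) → (Fin a → ℝ)) (g : (Fin p → ℝ) → (Fin p → ℝ))
    (Q : (Fin a → ℝ) → (Fin a → ℝ))
    (hQ : ∀ x : Fin a → ℝ, Q x ∈ LinearMap.range A.mulVecLin ∧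
      ∀ u ∈ LinearMap.range A.mulVecLin, (x - Q x) ⬝ᵥ u = 0)
    (φ : EuclideanSpace ℝ (Fin n) → ℝ) (hφdiff : Differentiable ℝ φ)
    (hφgrad : ∀ θ : EuclideanSpace ℝ (Fin n),
      gradient φ θ = Aᵀ.mulVec (f (A.mulVec θ)) + C.mulVec (g (Cᵀ.mulVec θ))) :
    ∃ ψ : EuclideanSpace ℝ (Fin a) → ℝ, Differentiable ℝ ψ ∧
      ∀ x : EuclideanSpace ℝ (Fin a), gradient ψ x = Q (f (Q x)) := by
  classical
  set KA := LinearMap.range A.mulVecLin with hKAdef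
  have hQmem : ∀ x, Q x ∈ KA := fun x => (hQ x).1
  have hQorth : ∀ x, ∀ u ∈ KA, (x - Q x) ⬝ᵥ u = 0 := fun x => (hQ x).2
  have hQuniq : ∀ x v, v ∈ KA → (∀ u ∈ KA, (x - v) ⬝ᵥ u = 0) → Q x = v :=
    fun x v hv hv2 => proj_unique_aux (hQmem x) (hQorth x) hv hv2
  have hQadd : ∀ x y, Q (x + y) = Q x + Q y := by
    intro x y
    refine hQuniq _ _ (KA.add_mem (hQmem x) (hQmem y)) (fun u hu => ?_)
    have e : x + y - (Q x + Q y) = (x - Q x) + (y - Q y) := by abel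
    rw [e, add_dotProduct, hQorth x u hu, hQorth y u hu, add_zero]
  have hQsmul : ∀ (c : ℝ) (x), Q (c • x) = c • Q x := by
    intro c x
    refine hQuniq _ _ (KA.smul_mem c (hQmem x)) (fun u hu => ?_)
    have e : c • x - c • Q x = c • (x - Q x) := (smul_sub c x (Q x)).symm
    rw [e, smul_dotProduct, hQorth x u hu, smul_zero]
  have hQsym : ∀ x y, Q x ⬝ᵥ y = x ⬝ᵥ Q y := by
    intro x y
    have h1 : Q x ⬝ᵥ (y - Q y) = 0 := by
      rw [dotProduct_comm]; exact hQorth y _ (hQmem x)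
    have h2 : (x - Q x) ⬝ᵥ Q y = 0 := hQorth x _ (hQmem y)
    rw [dotProduct_sub] at h1
    rw [sub_dotProduct] at h2
    linarith
  let Qlin : (Fin a → ℝ) →ₗ[ℝ] (Fin a → ℝ) :=
    { toFun := Q, map_add' := hQadd, map_smul' := hQsmul }
  obtain ⟨r, hr⟩ := A.mulVecLin.rangeRestrict.exists_rightInverse_of_surjective
    (LinearMap.range_rangeRestrict _)
  have hru : ∀ u : KA, A.mulVecLin (r u) = (u : Fin a → ℝ) :=
    fun u => congrArg Subtype.val (LinearMap.congr_fun hr u)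
  obtain ⟨πC, hπC⟩ := exists_proj_aux C
  let L : (Fin a → ℝ) →ₗ[ℝ] (Fin n → ℝ) :=
    (LinearMap.id - πC) ∘ₗ r ∘ₗ (Qlin.codRestrict KA hQmem)
  have hLx : ∀ x, L x = r ⟨Q x, hQmem x⟩ - πC (r ⟨Q x, hQmem x⟩) := fun x => rfl
  have hAL : ∀ x : Fin a → ℝ, A.mulVec (L x) = Q x := by
    intro x
    obtain ⟨w, hw⟩ := (hπC (r ⟨Q x, hQmem x⟩)).1
    have h1 : A.mulVec (πC (r ⟨Q x, hQmem x⟩)) = 0 := by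
      rw [← hw]
      show A *ᵥ (C *ᵥ w) = 0
      rw [Matrix.mulVec_mulVec, hAC, Matrix.zero_mulVec]
    have h2 : A.mulVec (r ⟨Q x, hQmem x⟩) = Q x := hru ⟨Q x, hQmem x⟩
    rw [hLx x, Matrix.mulVec_sub, h1, h2, sub_zero]
  have hCL : ∀ x : Fin a → ℝ, Cᵀ.mulVec (L x) = 0 := by
    intro x
    apply perp_range_mulVec_aux
    intro u hu
    rw [hLx x]
    exact (hπC (r ⟨Q x, hQmem x⟩)).2 u hu
  let Le : EuclideanSpace ℝ (Fin a) →ₗ[ℝ] EuclideanSpace ℝ (Fin n) :=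
    (WithLp.linearEquiv 2 ℝ (Fin n → ℝ)).symm.toLinearMap ∘ₗ L ∘ₗ
      (WithLp.linearEquiv 2 ℝ (Fin a → ℝ)).toLinearMap
  refine ⟨fun x => φ (Le x),
    hφdiff.comp Le.toContinuousLinearMap.differentiable, fun x => ?_⟩
  have hg := (hφdiff (Le x)).hasGradientAt
  have h2 := (hasGradientAt_comp_linear_aux Le hg).gradient
  have hφ' : gradient φ (Le x) = WithLp.toLp 2
      (Aᵀ.mulVec (f (A.mulVec (Le x))) + C.mulVec (g (Cᵀ.mulVec (Le x)))) := by
    rw [← hφgrad (Le x), WithLp.toLp_ofLp]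
  rw [h2, hφ']
  have e1 : A.mulVec (Le x) = Q x := hAL x
  have e2 : Cᵀ.mulVec (Le x) = 0 := hCL x
  rw [e1, e2, WithLp.toLp_add, map_add]
  have key1 : LinearMap.adjoint Le
      (WithLp.toLp 2 (Aᵀ.mulVec (f (Q x)))) = WithLp.toLp 2 (Q (f (Q x))) := by
    apply ext_inner_right ℝ
    intro w
    rw [LinearMap.adjoint_inner_left, dot_eq_inner_aux', dot_eq_inner_aux']
    show (Aᵀ *ᵥ f (Q x)) ⬝ᵥ (L w) = Q (f (Q x)) ⬝ᵥ w
    rw [mulVec_transpose, ← dotProduct_mulVec, hAL w]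
    exact (hQsym (f (Q x)) w).symm
  have key2 : LinearMap.adjoint Le
      (WithLp.toLp 2 (C.mulVec (g 0))) = 0 := by
    apply ext_inner_right ℝ
    intro w
    rw [LinearMap.adjoint_inner_left, dot_eq_inner_aux']
    show (C *ᵥ g 0) ⬝ᵥ (L w) = inner ℝ (0 : EuclideanSpace ℝ (Fin a)) w
    rw [dotProduct_comm, dotProduct_mulVec, ← mulVec_transpose, hCL w,
      zero_dotProduct, inner_zero_left]
  rw [key1, key2, add_zero]

/-- The vector field `G θ = Aᵀ f (A θ) + C g (Cᵀ θ)` (with `A * C = 0`, `f`, `g` smooth) is a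
gradient field if and only if the canonical representatives `Q ∘ f ∘ Q` and `P ∘ g ∘ P` are
gradient fields, where `Q` is the orthogonal projection onto `range A` and `P` the orthogonal
projection onto `range Cᵀ`. -/
theorem gradient_iff_canonical_representatives_gradient {a n p : ℕ}
    (A : Matrix (Fin a) (Fin n) ℝ) (C : Matrix (Fin n) (Fin p) ℝ)
    (hAC : A * C = 0)
    (f : (Fin a → ℝ) → (Fin a → ℝ)) (g : (Fin p → ℝ) → (Fin p → ℝ))
    (hf : ContDiff ℝ (⊤ : ℕ∞) f) (hg : ContDiff ℝ (⊤ : ℕ∞) g)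
    (Q : (Fin a → ℝ) → (Fin a → ℝ))
    (hQ : ∀ x : Fin a → ℝ, Q x ∈ LinearMap.range A.mulVecLin ∧
      ∀ u ∈ LinearMap.range A.mulVecLin, (x - Q x) ⬝ᵥ u = 0)
    (P : (Fin p → ℝ) → (Fin p → ℝ))
    (hP : ∀ y : Fin p → ℝ, P y ∈ LinearMap.range Cᵀ.mulVecLin ∧
      ∀ u ∈ LinearMap.range Cᵀ.mulVecLin, (y - P y) ⬝ᵥ u = 0) :
    (∃ φ : EuclideanSpace ℝ (Fin n) → ℝ, Differentiable ℝ φ ∧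
      ∀ θ : EuclideanSpace ℝ (Fin n),
        gradient φ θ = Aᵀ.mulVec (f (A.mulVec θ)) + C.mulVec (g (Cᵀ.mulVec θ))) ↔
    ((∃ ψ₁ : EuclideanSpace ℝ (Fin a) → ℝ, Differentiable ℝ ψ₁ ∧
        ∀ x : EuclideanSpace ℝ (Fin a), gradient ψ₁ x = Q (f (Q x))) ∧
     (∃ ψ₂ : EuclideanSpace ℝ (Fin p) → ℝ, Differentiable ℝ ψ₂ ∧
        ∀ y : EuclideanSpace ℝ (Fin p), gradient ψ₂ y = P (g (P y)))) := by
  constructor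
  · rintro ⟨φ, hφdiff, hφgrad⟩
    have hCA : Cᵀ * Aᵀ = 0 := by
      rw [← Matrix.transpose_mul, hAC, Matrix.transpose_zero]
    refine ⟨forward_aux A C hAC f g Q hQ φ hφdiff hφgrad,
      forward_aux Cᵀ Aᵀ hCA g f P hP φ hφdiff ?_⟩
    intro θ
    rw [hφgrad θ, Matrix.transpose_transpose, Matrix.transpose_transpose]
    exact add_comm _ _
  · rintro ⟨⟨ψ₁, h1d, h1g⟩, ψ₂, h2d, h2g⟩
    have hQid : ∀ v ∈ LinearMap.range A.mulVecLin, Q v = v := fun v hv =>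
      proj_unique_aux (hQ v).1 (hQ v).2 hv
        (fun u _ => by rw [sub_self, zero_dotProduct])
    have hPid : ∀ v ∈ LinearMap.range Cᵀ.mulVecLin, P v = v := fun v hv =>
      proj_unique_aux (hP v).1 (hP v).2 hv
        (fun u _ => by rw [sub_self, zero_dotProduct])
    have hAtQ : ∀ v, Aᵀ.mulVec (Q v) = Aᵀ.mulVec v := by
      intro v
      have h0 : Aᵀ *ᵥ (v - Q v) = 0 := perp_range_mulVec_aux A _ (hQ v).2
      rw [Matrix.mulVec_sub] at h0
      exact (sub_eq_zero.mp h0).symm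
    have hCP : ∀ v, C.mulVec (P v) = C.mulVec v := by
      intro v
      have h0 : (Cᵀ)ᵀ *ᵥ (v - P v) = 0 := perp_range_mulVec_aux Cᵀ _ (hP v).2
      rw [Matrix.transpose_transpose, Matrix.mulVec_sub] at h0
      exact (sub_eq_zero.mp h0).symm
    let Am : EuclideanSpace ℝ (Fin n) →ₗ[ℝ] EuclideanSpace ℝ (Fin a) :=
      (WithLp.linearEquiv 2 ℝ (Fin a → ℝ)).symm.toLinearMap ∘ₗ A.mulVecLin ∘ₗ
        (WithLp.linearEquiv 2 ℝ (Fin n → ℝ)).toLinearMap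
    let Cm : EuclideanSpace ℝ (Fin n) →ₗ[ℝ] EuclideanSpace ℝ (Fin p) :=
      (WithLp.linearEquiv 2 ℝ (Fin p → ℝ)).symm.toLinearMap ∘ₗ Cᵀ.mulVecLin ∘ₗ
        (WithLp.linearEquiv 2 ℝ (Fin n → ℝ)).toLinearMap
    have hadjA : ∀ v : Fin a → ℝ,
        LinearMap.adjoint Am (WithLp.toLp 2 v) = WithLp.toLp 2 (Aᵀ.mulVec v) := by
      intro v
      apply ext_inner_right ℝ
      intro w
      rw [LinearMap.adjoint_inner_left, dot_eq_inner_aux', dot_eq_inner_aux']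
      show v ⬝ᵥ (A *ᵥ w) = (Aᵀ *ᵥ v) ⬝ᵥ w
      rw [dotProduct_mulVec, ← mulVec_transpose]
    have hadjC : ∀ v : Fin p → ℝ,
        LinearMap.adjoint Cm (WithLp.toLp 2 v) = WithLp.toLp 2 (C.mulVec v) := by
      intro v
      apply ext_inner_right ℝ
      intro w
      rw [LinearMap.adjoint_inner_left, dot_eq_inner_aux', dot_eq_inner_aux']
      show v ⬝ᵥ (Cᵀ *ᵥ w) = (C *ᵥ v) ⬝ᵥ w
      rw [dotProduct_mulVec, ← mulVec_transpose, Matrix.transpose_transpose]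
    refine ⟨fun θ => ψ₁ (Am θ) + ψ₂ (Cm θ),
      (h1d.comp Am.toContinuousLinearMap.differentiable).add
        (h2d.comp Cm.toContinuousLinearMap.differentiable), fun θ => ?_⟩
    have hG1 := hasGradientAt_comp_linear_aux Am (h1d (Am θ)).hasGradientAt
    have hG2 := hasGradientAt_comp_linear_aux Cm (h2d (Cm θ)).hasGradientAt
    have h := (hasGradientAt_add_aux hG1 hG2).gradient
    have h1g' : ∀ y, gradient ψ₁ y = WithLp.toLp 2 (Q (f (Q y))) := fun y => by
      rw [← h1g, WithLp.toLp_ofLp]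
    have h2g' : ∀ y, gradient ψ₂ y = WithLp.toLp 2 (P (g (P y))) := fun y => by
      rw [← h2g, WithLp.toLp_ofLp]
    rw [h, h1g' (Am θ), h2g' (Cm θ), hadjA, hadjC,
      hQid (Am θ).ofLp ⟨θ.ofLp, rfl⟩, hPid (Cm θ).ofLp ⟨θ.ofLp, rfl⟩, hAtQ, hCP]
    rfl
end

section
/- For every finset A of Fin n and all permutations σ, τ of Fin n, one has sgn(A.image σ, τ) * sgn(A, σ) = sgn(A, τ ∘ σ), where τ ∘ σ is the composite permutation applying σ first. -/
open Finset

/-- The permutation of `Fin A.card` induced by a permutation `σ` of `Fin n` on a finset `A`: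
`k ↦ e_{A.image σ}⁻¹ (σ (e_A k))`, where `e_A` enumerates `A` in increasing order. -/
noncomputable def relPerm {n : ℕ} (σ : Equiv.Perm (Fin n)) (A : Finset (Fin n)) :
    Equiv.Perm (Fin A.card) :=
  ((A.orderIsoOfFin rfl).toEquiv.trans
      ((σ : Fin n ≃ Fin n).subtypeEquiv (p := (· ∈ A)) (q := (· ∈ A.image ⇑σ))
        (fun a => ⟨fun ha => Finset.mem_image_of_mem σ ha,
          fun h => by
            obtain ⟨a', ha', h'⟩ := Finset.mem_image.mp h
            rwa [← σ.injective h']⟩))).trans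
    ((A.image ⇑σ).orderIsoOfFin
      (Finset.card_image_of_injective A σ.injective)).toEquiv.symm

/-- `sgn(A, σ) ∈ {1, -1}`: the sign of the permutation by which `σ` rearranges the elements
of `A`. -/
noncomputable def sgnA {n : ℕ} (σ : Equiv.Perm (Fin n)) (A : Finset (Fin n)) : ℤ :=
  ((Equiv.Perm.sign (relPerm σ A) : ℤˣ) : ℤ)

lemma orderIsoOfFin_congr {α} [LinearOrder α] {A B : Finset α} (h : A = B) {m : ℕ}
    (hA : A.card = m) (hB : B.card = m) (i : Fin m) :
    (A.orderIsoOfFin hA i : α) = B.orderIsoOfFin hB i := by subst h; rfl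

lemma orderIsoOfFin_cast {α} [LinearOrder α] (A : Finset α) {m k : ℕ} (hm : A.card = m)
    (hk : A.card = k) (h : m = k) (i : Fin m) :
    (A.orderIsoOfFin hm i : α) = A.orderIsoOfFin hk (Fin.cast h i) := by
  subst hm hk; rfl

lemma relPerm_val {n : ℕ} (σ : Equiv.Perm (Fin n)) (A : Finset (Fin n))
    (h : (A.image ⇑σ).card = A.card) (k : Fin A.card) :
    (((A.image ⇑σ).orderIsoOfFin h) (relPerm σ A k) : Fin n) = σ (A.orderIsoOfFin rfl k) := by
  simp [relPerm]

/-- Multiplicativity of relative signs: `sgn(A.image σ, τ) * sgn(A, σ) = sgn(A, τ ∘ σ)`. -/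
theorem sgnA_mul {n : ℕ} (A : Finset (Fin n)) (σ τ : Equiv.Perm (Fin n)) :
    sgnA τ (A.image ⇑σ) * sgnA σ A = sgnA (τ * σ) A := by
  have hB : (A.image ⇑σ).card = A.card := Finset.card_image_of_injective A σ.injective
  have hCB : ((A.image ⇑σ).image ⇑τ).card = (A.image ⇑σ).card :=
    Finset.card_image_of_injective _ τ.injective
  have hC : ((A.image ⇑σ).image ⇑τ).card = A.card := hCB.trans hB
  have hD : (A.image ⇑(τ * σ)).card = A.card := Finset.card_image_of_injective A (τ * σ).injective
  have hCD : (A.image ⇑σ).image ⇑τ = A.image ⇑(τ * σ) := by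
    rw [Finset.image_image]; rfl
  have key : (finCongr hB).permCongr (relPerm τ (A.image ⇑σ)) * relPerm σ A
      = relPerm (τ * σ) A := by
    ext k
    refine congrArg Fin.val
      ((((A.image ⇑σ).image ⇑τ).orderIsoOfFin hC).injective (Subtype.coe_injective ?_))
    simp only [Equiv.Perm.mul_apply, Equiv.permCongr_apply, finCongr_apply, finCongr_symm_apply]
    rw [← orderIsoOfFin_cast _ hCB hC hB, relPerm_val, ← orderIsoOfFin_cast _ hB rfl hB.symm,
      relPerm_val, orderIsoOfFin_congr hCD hC hD, relPerm_val]
    rfl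
  calc sgnA τ (A.image ⇑σ) * sgnA σ A
      = ((Equiv.Perm.sign ((finCongr hB).permCongr (relPerm τ (A.image ⇑σ))) : ℤˣ) : ℤ)
        * sgnA σ A := by
        rw [Equiv.Perm.sign_permCongr]; rfl
    _ = sgnA (τ * σ) A := by
        unfold sgnA
        rw [← key, map_mul]; push_cast; ring
end

section
/- Let A be a finset of Fin n of cardinality d+1, σ a permutation of Fin n, and k : Fin (d+1). Let i_k = e_A(k) be the (k+1)-st smallest element of A, and let j : Fin (d+1) be the index of σ(i_k) in the increasing enumeration of A.image σ, i.e. j = e_{A.image σ}⁻¹(σ(i_k)). Then sgn(A, σ) * (−1)^k * sgn(A.erase i_k, σ) = (−1)^j. -/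
open Finset

/-- Sign relation when a permutation of `Fin (d+1)` restricts along `succAbove`. -/
lemma sign_eq_of_succAbove {d : ℕ} (π : Equiv.Perm (Fin (d + 1)))
    (π' : Equiv.Perm (Fin d)) (a : Fin (d + 1))
    (h : ∀ m, π (a.succAbove m) = (π a).succAbove (π' m)) :
    Equiv.Perm.sign π' = (-1 : ℤˣ) ^ ((π a : Fin (d + 1)) : ℕ) * Equiv.Perm.sign π
      * (-1 : ℤˣ) ^ (a : ℕ) := by
  have hτ : (π a).cycleRange * π * (a.cycleRange)⁻¹
      = Equiv.Perm.decomposeFin.symm (0, π') := by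
    ext x
    induction x using Fin.cases with
    | zero =>
      simp [Equiv.Perm.mul_apply, Equiv.Perm.inv_def, Fin.cycleRange_symm_zero,
        Fin.cycleRange_self]
    | succ m =>
      simp [Equiv.Perm.mul_apply, Equiv.Perm.inv_def, Fin.cycleRange_symm_succ, h,
        Fin.cycleRange_succAbove, Equiv.Perm.decomposeFin_symm_apply_succ]
  have hs := congrArg Equiv.Perm.sign hτ
  rw [Equiv.Perm.decomposeFin.symm_sign, if_pos rfl, one_mul, map_mul, map_mul,
    Equiv.Perm.sign_inv, Fin.sign_cycleRange, Fin.sign_cycleRange] at hs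
  exact hs.symm

lemma orderEmbOfFin_congr {α : Type*} [DecidableEq α] [LinearOrder α] {s t : Finset α} (hst : s = t) {m : ℕ}
    (h : s.card = m) (i : Fin m) : s.orderEmbOfFin h i = t.orderEmbOfFin (hst ▸ h) i := by
  subst hst; rfl

/-- The `m`-th element of `s.erase (s.orderEmbOfFin h k)` is the `k.succAbove m`-th of `s`. -/
lemma erase_orderEmbOfFin {α : Type*} [DecidableEq α] [LinearOrder α] (s : Finset α) {d : ℕ}
    (h : s.card = d + 1) (k : Fin (d + 1))
    (h' : (s.erase (s.orderEmbOfFin h k)).card = d) (m : Fin d) :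
    (s.erase (s.orderEmbOfFin h k)).orderEmbOfFin h' m = s.orderEmbOfFin h (k.succAbove m) := by
  have hu := Finset.orderEmbOfFin_unique (f := fun m => s.orderEmbOfFin h (k.succAbove m)) h'
    (fun m => Finset.mem_erase.2
      ⟨fun hc => (k.succAbove_ne m) ((s.orderEmbOfFin h).injective hc),
        s.orderEmbOfFin_mem h _⟩)
    ((s.orderEmbOfFin h).strictMono.comp (Fin.strictMono_succAbove k))
  exact (congrFun hu m).symm

/-- Characterization of `relPerm` transported to `Fin m`. -/
lemma relPerm_apply_eq_iff {n : ℕ} (σ : Equiv.Perm (Fin n)) (A : Finset (Fin n))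
    {m : ℕ} (hA : A.card = m) (himg : (A.image ⇑σ).card = m) (x y : Fin m) :
    (finCongr hA).permCongr (relPerm σ A) x = y ↔
      σ (A.orderEmbOfFin hA x) = (A.image ⇑σ).orderEmbOfFin himg y := by
  rw [Equiv.permCongr_apply, Equiv.apply_eq_iff_eq_symm_apply]
  simp only [relPerm, Equiv.trans_apply, Equiv.symm_apply_eq]
  rw [show ((A.image ⇑σ).orderIsoOfFin (Finset.card_image_of_injective A σ.injective)).toEquiv
      ((finCongr hA).symm y)
      = ⟨(A.image ⇑σ).orderEmbOfFin himg y, (A.image ⇑σ).orderEmbOfFin_mem himg y⟩ from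
    Subtype.ext (by simp [Finset.orderEmbOfFin_eq_orderEmbOfFin_iff])]
  rw [show (A.orderIsoOfFin rfl).toEquiv ((finCongr hA).symm x)
      = ⟨A.orderEmbOfFin hA x, A.orderEmbOfFin_mem hA x⟩ from
    Subtype.ext (by simp [Finset.orderEmbOfFin_eq_orderEmbOfFin_iff])]
  rw [Subtype.ext_iff]
  simp [Equiv.subtypeEquiv_apply]


/-- For `A` of cardinality `d + 1`, `i_k` the `(k+1)`-st smallest element of `A`, and `j` the
index of `σ i_k` in the increasing enumeration of `A.image σ`:
`sgn(A, σ) * (-1)^k * sgn(A.erase i_k, σ) = (-1)^j`. -/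
theorem sgnA_erase {n d : ℕ} (A : Finset (Fin n)) (σ : Equiv.Perm (Fin n))
    (hA : A.card = d + 1) (k : Fin (d + 1)) :
    sgnA σ A * (-1) ^ (k : ℕ) * sgnA σ (A.erase (A.orderIsoOfFin hA k : Fin n)) =
      (-1) ^ ((((A.image ⇑σ).orderIsoOfFin
          (by rw [Finset.card_image_of_injective A σ.injective, hA])).symm
          ⟨σ (A.orderIsoOfFin hA k : Fin n),
            Finset.mem_image_of_mem ⇑σ (A.orderIsoOfFin hA k).2⟩ : Fin (d + 1)) : ℕ) := by
  classical
  set ik : Fin n := (A.orderIsoOfFin hA k : Fin n) with hik_def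
  have hikA : ik ∈ A := (A.orderIsoOfFin hA k).2
  set B : Finset (Fin n) := A.erase ik with hB_def
  have hB : B.card = d := by
    rw [hB_def, Finset.card_erase_of_mem hikA, hA]
    omega
  have himg : (A.image ⇑σ).card = d + 1 := by
    rw [Finset.card_image_of_injective A σ.injective, hA]
  have hBimg : (B.image ⇑σ).card = d := by
    rw [Finset.card_image_of_injective B σ.injective, hB]
  set π : Equiv.Perm (Fin (d + 1)) := (finCongr hA).permCongr (relPerm σ A) with hπ
  set π' : Equiv.Perm (Fin d) := (finCongr hB).permCongr (relPerm σ B) with hπ'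
  set j : Fin (d + 1) := ((A.image ⇑σ).orderIsoOfFin himg).symm
    ⟨σ ik, Finset.mem_image_of_mem ⇑σ hikA⟩ with hj
  have hej : (A.image ⇑σ).orderEmbOfFin himg j = σ ik :=
    congrArg Subtype.val (((A.image ⇑σ).orderIsoOfFin himg).apply_symm_apply
      ⟨σ ik, Finset.mem_image_of_mem ⇑σ hikA⟩)
  have hπk : π k = j := by
    rw [hπ, relPerm_apply_eq_iff σ A hA himg, hej]
    rfl
  have hBimg_eq : B.image ⇑σ = (A.image ⇑σ).erase ((A.image ⇑σ).orderEmbOfFin himg j) := by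
    rw [hej]; exact Finset.image_erase σ.injective A ik
  have hsucc : ∀ m : Fin d, π (k.succAbove m) = (π k).succAbove (π' m) := by
    intro m
    rw [hπ, relPerm_apply_eq_iff σ A hA himg, hπk]
    have hm : σ (B.orderEmbOfFin hB m) = (B.image ⇑σ).orderEmbOfFin hBimg (π' m) :=
      (relPerm_apply_eq_iff σ B hB hBimg m (π' m)).1 rfl
    have h1 : B.orderEmbOfFin hB m = A.orderEmbOfFin hA (k.succAbove m) :=
      erase_orderEmbOfFin A hA k hB m
    have h2 : (B.image ⇑σ).orderEmbOfFin hBimg (π' m)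
        = (A.image ⇑σ).orderEmbOfFin himg (j.succAbove (π' m)) := by
      rw [orderEmbOfFin_congr hBimg_eq hBimg (π' m)]
      exact erase_orderEmbOfFin (A.image ⇑σ) himg j _ (π' m)
    rw [← h1, hm, h2]
  show sgnA σ A * (-1) ^ (k : ℕ) * sgnA σ B = (-1) ^ (j : ℕ)
  have hs' := sign_eq_of_succAbove π π' k hsucc
  rw [hπk] at hs'
  have hsA : sgnA σ A = ((Equiv.Perm.sign π : ℤˣ) : ℤ) := by
    simp [sgnA, hπ, Equiv.Perm.sign_permCongr]
  have hsB : sgnA σ B = ((Equiv.Perm.sign π' : ℤˣ) : ℤ) := by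
    simp [sgnA, hπ', Equiv.Perm.sign_permCongr]
  rw [hsA, hsB, hs']
  push_cast
  have hss : ((Equiv.Perm.sign π : ℤˣ) : ℤ) * ((Equiv.Perm.sign π : ℤˣ) : ℤ) = 1 := by
    rw [← Units.val_mul, ← sq, Int.units_sq, Units.val_one]
  have h2 : ((-1 : ℤ)) ^ (k : ℕ) * (-1) ^ (k : ℕ) = 1 := by
    rw [← pow_add]; exact Even.neg_one_pow ⟨(k : ℕ), rfl⟩
  calc ((Equiv.Perm.sign π : ℤˣ) : ℤ) * (-1) ^ (k : ℕ) *
        ((-1) ^ (j : ℕ) * ((Equiv.Perm.sign π : ℤˣ) : ℤ) * (-1) ^ (k : ℕ))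
      = (((Equiv.Perm.sign π : ℤˣ) : ℤ) * ((Equiv.Perm.sign π : ℤˣ) : ℤ)) *
        (((-1) ^ (k : ℕ) * (-1) ^ (k : ℕ)) * (-1) ^ (j : ℕ)) := by ring
    _ = (-1) ^ (j : ℕ) := by rw [hss, h2, one_mul, one_mul]
end
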